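/- No-iteration of unknown quantum gates (product-output form): Let d ≥ 2 and n ≥ 2 be integers. There do not exist an ancilla dimension m ≥ 1, a unit vector e₀ ∈ ℂ^m, unitary matrices A and B acting on ℂ^d ⊗ ℂ^m, and an assignment to each d×d unitary matrix U of a unit vector a_U ∈ ℂ^m, such that for every d×d unitary matrix U and every vector ψ ∈ ℂ^d one has B (U ⊗ I_m) A (ψ ⊗ e₀) = (Uⁿ ψ) ⊗ a_U. -/
import Mathlib


open Matrix Polynomial
open scoped Kronecker

/-- The tensor (Kronecker) product of two vectors. -/
def tensorVec {d m : ℕ} (ψ : Fin d → ℂ) (φ : Fin m → ℂ) : Fin d × Fin m → ℂ :=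
  fun p => ψ p.1 * φ p.2

/-- **No-iteration of unknown quantum gates** (product-output form): for `d ≥ 2`, `n ≥ 2`,
there is no ancilla dimension `m ≥ 1`, unit vector `e₀ ∈ ℂ^m`, unitaries `A, B` on
`ℂ^d ⊗ ℂ^m`, and assignment `U ↦ a_U` of unit vectors in `ℂ^m`, such that
`B (U ⊗ I_m) A (ψ ⊗ e₀) = (Uⁿ ψ) ⊗ a_U` for all unitary `U` and all `ψ`. -/
theorem no_iteration_of_unknown_gates (d n : ℕ) (hd : 2 ≤ d) (hn : 2 ≤ n) :
    ¬ ∃ (m : ℕ) (e₀ : Fin m → ℂ)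
        (A B : Matrix (Fin d × Fin m) (Fin d × Fin m) ℂ)
        (a : Matrix.unitaryGroup (Fin d) ℂ → Fin m → ℂ),
      1 ≤ m ∧
      star e₀ ⬝ᵥ e₀ = 1 ∧
      A ∈ Matrix.unitaryGroup (Fin d × Fin m) ℂ ∧
      B ∈ Matrix.unitaryGroup (Fin d × Fin m) ℂ ∧
      (∀ U : Matrix.unitaryGroup (Fin d) ℂ, star (a U) ⬝ᵥ a U = 1) ∧
      (∀ (U : Matrix.unitaryGroup (Fin d) ℂ) (ψ : Fin d → ℂ),
        (B * (((U : Matrix (Fin d) (Fin d) ℂ)) ⊗ₖ (1 : Matrix (Fin m) (Fin m) ℂ)) * A).mulVec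
            (tensorVec ψ e₀)
          = tensorVec (((U : Matrix (Fin d) (Fin d) ℂ) ^ n).mulVec ψ) (a U)) := by
  rintro ⟨m, e₀, A, B, a, hm, he, hA, hB, ha, h⟩
  have hd0 : (0:ℕ) < d := by omega
  have hd1 : (1:ℕ) < d := by omega
  set i0 : Fin d := ⟨0, hd0⟩ with hi0def
  set i1 : Fin d := ⟨1, hd1⟩ with hi1def
  have hne : i1 ≠ i0 := by simp [hi0def, hi1def, Fin.ext_iff]
  -- the family of diagonal unitaries
  set Uf : ℂ → Matrix (Fin d) (Fin d) ℂ :=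
    fun ω => Matrix.diagonal (fun i => if i = i0 then ω else 1) with hUfdef
  have hmem : ∀ ω : ℂ, ω * (starRingEnd ℂ) ω = 1 →
      Uf ω ∈ Matrix.unitaryGroup (Fin d) ℂ := by
    intro ω hω
    rw [Matrix.mem_unitaryGroup_iff, Matrix.star_eq_conjTranspose, hUfdef,
      Matrix.diagonal_conjTranspose, Matrix.diagonal_mul_diagonal]
    ext i j
    by_cases hij : i = j
    · subst hij
      by_cases hi : i = i0 <;>
        simp [Matrix.diagonal_apply, Matrix.one_apply, hi, Pi.mul_apply, Pi.star_apply] <;>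
          simpa using hω
    · simp [Matrix.diagonal_apply, Matrix.one_apply, hij]
  -- decomposition of Uf ω
  set E : Matrix (Fin d) (Fin d) ℂ := Matrix.of (fun i j => if i = i0 ∧ j = i0 then 1 else 0)
    with hEdef
  have hU : ∀ ω : ℂ, Uf ω = 1 + (ω - 1) • E := by
    intro ω
    ext i j
    rw [hUfdef]
    simp only [Matrix.diagonal_apply, Matrix.add_apply, Matrix.smul_apply, Matrix.one_apply,
      hEdef, Matrix.of_apply, smul_eq_mul]
    by_cases hij : i = j <;> by_cases hi : i = i0 <;> by_cases hj : j = i0 <;>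
      simp_all <;> ring
  set M : Matrix (Fin d × Fin m) (Fin d × Fin m) ℂ := B * A with hMdef
  set K : Matrix (Fin d × Fin m) (Fin d × Fin m) ℂ :=
    B * (E ⊗ₖ (1 : Matrix (Fin m) (Fin m) ℂ)) * A with hKdef
  -- the key pointwise identity
  have key : ∀ (ω : ℂ) (hω : Uf ω ∈ Matrix.unitaryGroup (Fin d) ℂ)
      (ψ : Fin d → ℂ) (p : Fin d × Fin m),
      M.mulVec (tensorVec ψ e₀) p + (ω - 1) * K.mulVec (tensorVec ψ e₀) p
        = ((Uf ω ^ n).mulVec ψ) p.1 * a ⟨Uf ω, hω⟩ p.2 := by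
    intro ω hω ψ p
    have h1 := h ⟨Uf ω, hω⟩ ψ
    have hsplit : (B * ((Uf ω) ⊗ₖ (1 : Matrix (Fin m) (Fin m) ℂ)) * A) = M + (ω - 1) • K := by
      rw [hU ω, Matrix.add_kronecker, Matrix.smul_kronecker, Matrix.one_kronecker_one,
        hMdef, hKdef]
      rw [mul_add, add_mul, mul_one]
      congr 1
      rw [Matrix.mul_smul, Matrix.smul_mul]
    rw [show ((⟨Uf ω, hω⟩ : Matrix.unitaryGroup (Fin d) ℂ) : Matrix (Fin d) (Fin d) ℂ) = Uf ω
      from rfl, hsplit] at h1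
    have h2 := congrFun h1 p
    rw [Matrix.add_mulVec, Matrix.smul_mulVec] at h2
    simpa [tensorVec, smul_eq_mul] using h2
  -- powers
  have hpow : ∀ ω : ℂ, Uf ω ^ n = Matrix.diagonal (fun i => if i = i0 then ω ^ n else 1) := by
    intro ω
    rw [hUfdef, Matrix.diagonal_pow]
    have hfun : ((fun i : Fin d => if i = i0 then ω else 1) ^ n)
        = fun i => if i = i0 then ω ^ n else 1 := by
      funext i
      rw [Pi.pow_apply]
      by_cases hi : i = i0 <;> simp [hi]
    rw [hfun]
  have mem1 : Uf 1 ∈ Matrix.unitaryGroup (Fin d) ℂ := hmem 1 (by simp)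
  set U1 : Matrix.unitaryGroup (Fin d) ℂ := ⟨Uf 1, mem1⟩ with hU1def
  -- for each ancilla coordinate, a U1 k = 0
  have hzero : ∀ k : Fin m, a U1 k = 0 := by
    intro k
    set c0 : ℂ := M.mulVec (tensorVec (Pi.single i1 1) e₀) (i1, k) with hc0def
    set c1 : ℂ := K.mulVec (tensorVec (Pi.single i1 1) e₀) (i1, k) with hc1def
    set b0 : ℂ := M.mulVec (tensorVec (Pi.single i0 1) e₀) (i0, k) with hb0def
    set b1 : ℂ := K.mulVec (tensorVec (Pi.single i0 1) e₀) (i0, k) with hb1def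
    have eqA : ∀ (ω : ℂ) (hω : Uf ω ∈ Matrix.unitaryGroup (Fin d) ℂ),
        c0 + (ω - 1) * c1 = a ⟨Uf ω, hω⟩ k := by
      intro ω hω
      have hk := key ω hω (Pi.single i1 1) (i1, k)
      rw [hpow] at hk
      rw [Matrix.mulVec_diagonal] at hk
      simpa [hne, hc0def, hc1def] using hk
    have eqB : ∀ (ω : ℂ) (hω : Uf ω ∈ Matrix.unitaryGroup (Fin d) ℂ),
        b0 + (ω - 1) * b1 = ω ^ n * a ⟨Uf ω, hω⟩ k := by
      intro ω hω
      have hk := key ω hω (Pi.single i0 1) (i0, k)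
      rw [hpow] at hk
      rw [Matrix.mulVec_diagonal] at hk
      simpa [hb0def, hb1def] using hk
    have comb : ∀ (ω : ℂ), ω * (starRingEnd ℂ) ω = 1 →
        b0 + (ω - 1) * b1 = ω ^ n * (c0 + (ω - 1) * c1) := by
      intro ω hω
      rw [eqA ω (hmem ω hω)]
      exact eqB ω (hmem ω hω)
    -- the vanishing polynomial
    set q : ℂ[X] := C c1 * X ^ (n+1) + C (c0 - c1) * X ^ n - C b1 * X - C (b0 - b1) with hqdef
    have hroots : (fun t : ℝ => Complex.exp (↑t * Complex.I)) '' Set.Ioo 0 1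
        ⊆ {x : ℂ | q.IsRoot x} := by
      rintro z ⟨t, _, rfl⟩
      have hunit : Complex.exp (↑t * Complex.I) *
          (starRingEnd ℂ) (Complex.exp (↑t * Complex.I)) = 1 := by
        have hconj : (starRingEnd ℂ) (↑t * Complex.I) = -(↑t * Complex.I) := by
          simp [_root_.map_mul, Complex.conj_I, Complex.conj_ofReal, mul_neg]
        rw [← Complex.exp_conj, hconj, ← Complex.exp_add, add_neg_cancel, Complex.exp_zero]
      have hc := comb _ hunit
      simp only [Set.mem_setOf_eq, IsRoot, hqdef, eval_add, eval_sub, eval_mul, eval_pow,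
        eval_C, eval_X]
      have hps : Complex.exp (↑t * Complex.I) ^ (n+1)
          = Complex.exp (↑t * Complex.I) ^ n * Complex.exp (↑t * Complex.I) := pow_succ _ _
      linear_combination hps * c1 - hc
    have hinj : Set.InjOn (fun t : ℝ => Complex.exp (↑t * Complex.I)) (Set.Ioo 0 1) := by
      intro s hs t ht hst
      rw [Complex.exp_eq_exp_iff_exists_int] at hst
      obtain ⟨j, hj⟩ := hst
      have him := congrArg Complex.im hj
      simp [Complex.add_im, Complex.mul_im] at him
      -- him : s = t + j * (2 * π)
      have hjz : (j : ℝ) = 0 := by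
        rcases hs with ⟨hs0, hs1⟩
        rcases ht with ⟨ht0, ht1⟩
        have hpi := Real.pi_gt_three
        by_contra hj0
        have : (1:ℝ) ≤ |(j:ℝ)| := by
          have : j ≠ 0 := by exact_mod_cast hj0
          exact_mod_cast Int.one_le_abs (by exact_mod_cast this)
        rcases abs_cases (j:ℝ) with ⟨hja, _⟩ | ⟨hja, _⟩ <;> nlinarith
      have : (s:ℝ) = t := by
        rw [hjz] at him
        linarith [him]
      exact_mod_cast this
    have hq0 : q = 0 := by
      apply Polynomial.eq_zero_of_infinite_isRoot
      exact ((Set.Ioo_infinite (by norm_num : (0:ℝ) < 1)).image hinj).mono hroots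
    have hn1 : n + 1 ≠ 1 := by omega
    have hn2 : n ≠ n + 1 := by omega
    have hn3 : n ≠ 1 := by omega
    have hn4 : n ≠ 0 := by omega
    have hn5 : n + 1 ≠ 0 := by omega
    have hc1 : c1 = 0 := by
      have h5 := congrArg (fun p : ℂ[X] => p.coeff (n+1)) hq0
      simp only [hqdef, coeff_add, coeff_sub, coeff_C_mul, coeff_X_pow, coeff_C,
        coeff_X, coeff_zero] at h5
      rw [if_pos trivial, if_neg (by omega : ¬(n+1 = n)), if_neg (by omega : ¬(1 = n+1)),
        if_neg (by omega : ¬(n+1 = 0))] at h5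
      linear_combination h5
    have hc0 : c0 = 0 := by
      have h5 := congrArg (fun p : ℂ[X] => p.coeff n) hq0
      simp only [hqdef, coeff_add, coeff_sub, coeff_C_mul, coeff_X_pow, coeff_C,
        coeff_X, coeff_zero] at h5
      rw [if_neg (by omega : ¬(n = n + 1)), if_pos trivial, if_neg (by omega : ¬(1 = n)),
        if_neg (by omega : ¬(n = 0))] at h5
      linear_combination h5 + hc1
    have := eqA 1 mem1
    rw [hc0, hc1] at this
    simpa [hU1def] using this.symm
  -- contradiction with normalization
  have h1 := ha U1
  simp [dotProduct, hzero] at h1
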